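/- arXiv:1705.08572 — 3 statements merged into one kernel-verified Lean document; each statement's English description precedes it below -/
import Mathlib

section
/- Finite-point structure (Lemma 1): Assume the weights Q_1, …, Q_K are pairwise distinct. If p* ∈ D is a global maximizer of F over D, then for every k ∈ {1, …, K} the partial sum S_k(p*) = p*_1 + ⋯ + p*_k belongs to the finite candidate set E = {0, P_max} ∪ {η(g_j Q_j − g_i Q_i)/(g_i g_j (Q_i − Q_j)) : 1 ≤ i < j ≤ K} ∪ {Q_i/Z − η/g_i : 1 ≤ i ≤ K}. -/
open Finset

/-- Prefix sum `S_k(p) = p_1 + ⋯ + p_k` (0-based: sum of the first `k` coordinates). -/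
noncomputable def Sfun (K : ℕ) (p : Fin K → ℝ) (k : ℕ) : ℝ :=
  ∑ j : Fin K, if (j : ℕ) < k then p j else 0

/-- The NOMA objective `F`. -/
noncomputable def Fobj (K : ℕ) (g Q : Fin K → ℝ) (η Z : ℝ) (p : Fin K → ℝ) : ℝ :=
  (∑ k : Fin K, Q k * Real.log (1 + p k * g k / (Sfun K p (k : ℕ) * g k + η)))
    - Z * Sfun K p K

/-- The feasible set `D`. -/
def Dfeas (K : ℕ) (Pmax : ℝ) : Set (Fin K → ℝ) :=
  {p | (∀ k, 0 ≤ p k) ∧ Sfun K p K ≤ Pmax}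

/-- The finite candidate set `E`. -/
def Ecand (K : ℕ) (g Q : Fin K → ℝ) (η Z Pmax : ℝ) : Set ℝ :=
  ({0, Pmax} : Set ℝ)
    ∪ {x | ∃ i j : Fin K, i < j ∧
        x = η * (g j * Q j - g i * Q i) / (g i * g j * (Q i - Q j))}
    ∪ {x | ∃ i : Fin K, x = Q i / Z - η / g i}


open Real Filter Topology

/-! In terms of the prefix sums `s n = S_n(p)` the rate of user `m` (users are indexed from `0`)
telescopes to `log (s (m+1) g_m + η) - log (s m g_m + η)`. Fix `k` with `0 < S_k < P_max` and let
`(i, b]` be the maximal block of indices `n` with `S_n = S_k = t`. Moving the prefix sums on this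
whole block to a common value `x` near `t` keeps the allocation feasible and changes `F` only
through user `i`, and through user `b` (or through the power cost `-Z x` when `b = K`).
Stationarity at `x = t` gives `Q_i g_i / (t g_i + η) = Q_b g_b / (t g_b + η)`, resp. `= Z`, and
solving for `t` yields the two families of candidates in `E`. -/

section PrefixSums

variable {K : ℕ}

lemma Sfun_zero (p : Fin K → ℝ) : Sfun K p 0 = 0 := by
  simp [Sfun]

lemma Sfun_succ (p : Fin K → ℝ) {n : ℕ} (hn : n < K) :
    Sfun K p (n + 1) = Sfun K p n + p ⟨n, hn⟩ := by
  have h : ∀ j : Fin K, (if (j : ℕ) < n + 1 then p j else 0)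
      = (if (j : ℕ) < n then p j else 0) + if j = ⟨n, hn⟩ then p j else 0 := by
    intro j
    simp only [Fin.ext_iff]
    split_ifs <;> first | omega | ring
  simp only [Sfun, h, sum_add_distrib, sum_ite_eq', mem_univ, if_true]

lemma Sfun_mono {p : Fin K → ℝ} (hp : ∀ j, 0 ≤ p j) {m n : ℕ} (h : m ≤ n) :
    Sfun K p m ≤ Sfun K p n :=
  sum_le_sum fun j _ => by split_ifs <;> first | exact le_rfl | exact hp j | omega

lemma Sfun_nonneg {p : Fin K → ℝ} (hp : ∀ j, 0 ≤ p j) (n : ℕ) : 0 ≤ Sfun K p n := by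
  simpa [Sfun_zero] using Sfun_mono hp (Nat.zero_le n)

def ofPrefixSums (K : ℕ) (s : ℕ → ℝ) : Fin K → ℝ := fun m => s (m + 1) - s m

lemma Sfun_ofPrefixSums (s : ℕ → ℝ) {n : ℕ} (hn : n ≤ K) :
    Sfun K (ofPrefixSums K s) n = s n - s 0 := by
  induction n with
  | zero => simp [Sfun_zero]
  | succ n ih =>
    rw [Sfun_succ _ hn, ih (by omega)]
    simp only [ofPrefixSums]
    ring

def replaceBlock (s : ℕ → ℝ) (i b : ℕ) (x : ℝ) : ℕ → ℝ :=
  fun n => if i < n ∧ n ≤ b then x else s n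

lemma replaceBlock_step_mono {s : ℕ → ℝ} {i b : ℕ} {x : ℝ} (hs : ∀ m < K, s m ≤ s (m + 1))
    (hlo : s i ≤ x) (hhi : b < K → x ≤ s (b + 1)) (m : ℕ) (hm : m < K) :
    replaceBlock s i b x m ≤ replaceBlock s i b x (m + 1) := by
  unfold replaceBlock
  split_ifs with h1 h2
  · exact le_rfl
  · obtain rfl : m = b := by omega
    exact hhi hm
  · obtain rfl : m = i := by omega
    exact hlo
  · exact hs m hm

lemma exists_maximal_block {p : Fin K → ℝ} (hp : ∀ j, 0 ≤ p j) {k : ℕ} (hk1 : 1 ≤ k)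
    (hkK : k ≤ K) (hpos : 0 < Sfun K p k) :
    ∃ (i : Fin K) (b : ℕ), (i : ℕ) < b ∧ b ≤ K ∧
      (∀ n, (i : ℕ) < n → n ≤ b → Sfun K p n = Sfun K p k) ∧ Sfun K p i < Sfun K p k ∧
      (b < K → Sfun K p k < Sfun K p (b + 1)) := by
  classical
  have hk : Sfun K p (k - 1 + 1) = Sfun K p k := by rw [Nat.sub_add_cancel hk1]
  have hex : ∃ m, Sfun K p (m + 1) = Sfun K p k := ⟨k - 1, hk⟩
  set i := Nat.find hex
  have hi : Sfun K p (i + 1) = Sfun K p k := Nat.find_spec hex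
  have hik : i < k := by have := Nat.find_min' hex hk; omega
  set b := Nat.findGreatest (fun n => Sfun K p n = Sfun K p k) K
  have hkb : k ≤ b := Nat.le_findGreatest hkK rfl
  have hb : Sfun K p b = Sfun K p k :=
    Nat.findGreatest_spec (P := fun n => Sfun K p n = Sfun K p k) hkK rfl
  have hlow : Sfun K p i < Sfun K p k := by
    refine lt_of_le_of_ne (hi ▸ Sfun_mono hp i.le_succ) fun heq => ?_
    obtain ⟨i', hi'⟩ : ∃ i', i = i' + 1 :=
      Nat.exists_eq_succ_of_ne_zero fun h0 => by rw [h0, Sfun_zero] at heq; linarith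
    exact Nat.find_min hex (by omega : i' < i) (by rwa [hi'] at heq)
  refine ⟨⟨i, by omega⟩, b, by simp only; omega, Nat.findGreatest_le K,
    fun n h1 h2 => le_antisymm (hb ▸ Sfun_mono hp h2) (hi ▸ Sfun_mono hp h1), hlow, fun hbK => ?_⟩
  exact lt_of_le_of_ne (hb ▸ Sfun_mono hp b.le_succ)
    (Ne.symm (Nat.findGreatest_is_greatest (Nat.lt_succ_self b) hbK))

end PrefixSums

section Objective

variable {K : ℕ} {g Q : Fin K → ℝ} {η Z Pmax : ℝ}

noncomputable def weightedRate (K : ℕ) (g Q : Fin K → ℝ) (η : ℝ) (s : ℕ → ℝ) : ℝ :=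
  ∑ m : Fin K, Q m * (log (s (m + 1) * g m + η) - log (s m * g m + η))

lemma Fobj_eq_weightedRate (hgpos : ∀ i, 0 < g i) (hη : 0 < η) {p : Fin K → ℝ}
    (hp : ∀ j, 0 ≤ p j) :
    Fobj K g Q η Z p = weightedRate K g Q η (Sfun K p) - Z * Sfun K p K := by
  unfold Fobj weightedRate
  congr 1
  refine sum_congr rfl fun m _ => ?_
  have hS := Sfun_nonneg hp m
  have hpm := hp m
  have hgm := hgpos m
  rw [Sfun_succ p m.isLt, Fin.eta, ← log_div (by positivity) (by positivity)]
  congr 2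
  field_simp
  ring

lemma Fobj_ofPrefixSums (hgpos : ∀ i, 0 < g i) (hη : 0 < η) {s : ℕ → ℝ} (hs0 : s 0 = 0)
    (hs : ∀ m, 0 ≤ ofPrefixSums K s m) :
    Fobj K g Q η Z (ofPrefixSums K s) = weightedRate K g Q η s - Z * s K := by
  have hS : ∀ n ≤ K, Sfun K (ofPrefixSums K s) n = s n := fun n hn => by
    rw [Sfun_ofPrefixSums s hn, hs0, sub_zero]
  rw [Fobj_eq_weightedRate hgpos hη hs, hS K le_rfl]
  congr 1
  exact sum_congr rfl fun m _ => by rw [hS _ m.isLt, hS _ m.isLt.le]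

/-- Only the users `i` and `b` straddle the ends of the block; inside it both prefix sums move
together and the rate stays `0`. -/
lemma weightedRate_replaceBlock {s : ℕ → ℝ} {i : Fin K} {b : ℕ} {t : ℝ} (hib : (i : ℕ) < b)
    (hblock : ∀ n, (i : ℕ) < n → n ≤ b → s n = t) (x : ℝ) :
    weightedRate K g Q η (replaceBlock s i b x) = weightedRate K g Q η s
      + Q i * (log (x * g i + η) - log (t * g i + η))
      - ∑ m : Fin K, if (m : ℕ) = b then Q m * (log (x * g m + η) - log (t * g m + η)) else 0 := by
  have hs : s = replaceBlock s i b t := funext fun n => by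
    unfold replaceBlock
    split_ifs with h
    · exact hblock n h.1 h.2
    · rfl
  conv_rhs => rw [hs]
  unfold weightedRate
  rw [← Fintype.sum_ite_eq' i fun m => Q m * (log (x * g m + η) - log (t * g m + η)),
    ← sum_add_distrib, ← sum_sub_distrib]
  refine sum_congr rfl fun m _ => ?_
  simp only [replaceBlock, Fin.ext_iff]
  split_ifs <;> first | omega | ring

lemma eventually_ofPrefixSums_replaceBlock_mem_Dfeas {p : Fin K → ℝ} (hp : p ∈ Dfeas K Pmax)
    {i b : ℕ} {t : ℝ} (hlow : Sfun K p i < t) (hhigh : b < K → t < Sfun K p (b + 1))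
    (hend : b = K → t < Pmax) (hbK : b ≤ K) :
    ∀ᶠ x in 𝓝 t, ofPrefixSums K (replaceBlock (Sfun K p) i b x) ∈ Dfeas K Pmax := by
  have hhigh' : ∀ᶠ x in 𝓝 t, b < K → x ≤ Sfun K p (b + 1) :=
    eventually_imp_distrib_left.2 fun hb => (gt_mem_nhds (hhigh hb)).mono fun _ => le_of_lt
  have hend' : ∀ᶠ x in 𝓝 t, b = K → x ≤ Pmax :=
    eventually_imp_distrib_left.2 fun hb => (gt_mem_nhds (hend hb)).mono fun _ => le_of_lt
  filter_upwards [lt_mem_nhds hlow, hhigh', hend'] with x hlo hhi hP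
  have hmono := replaceBlock_step_mono (fun m _ => Sfun_mono hp.1 m.le_succ) hlo.le hhi
  refine ⟨fun m => sub_nonneg.2 (hmono m m.isLt), ?_⟩
  rw [Sfun_ofPrefixSums _ le_rfl]
  simp only [replaceBlock, Nat.not_lt_zero, false_and, if_false, Sfun_zero, sub_zero]
  split_ifs with h
  · exact hP (by omega)
  · exact hp.2

lemma isLocalMax_replaceBlock_gain (hgpos : ∀ i, 0 < g i) (hη : 0 < η) {p : Fin K → ℝ}
    (hopt : ∀ q ∈ Dfeas K Pmax, Fobj K g Q η Z q ≤ Fobj K g Q η Z p) (hp : p ∈ Dfeas K Pmax)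
    {i : Fin K} {b : ℕ} {t : ℝ} (hib : (i : ℕ) < b) (hbK : b ≤ K)
    (hblock : ∀ n, (i : ℕ) < n → n ≤ b → Sfun K p n = t) (hlow : Sfun K p i < t)
    (hhigh : b < K → t < Sfun K p (b + 1)) (hend : b = K → t < Pmax) :
    IsLocalMax (fun x => Q i * (log (x * g i + η) - log (t * g i + η))
      - (∑ m : Fin K, if (m : ℕ) = b then Q m * (log (x * g m + η) - log (t * g m + η)) else 0)
      - if b = K then Z * (x - t) else 0) t := by
  filter_upwards [eventually_ofPrefixSums_replaceBlock_mem_Dfeas hp hlow hhigh hend hbK]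
    with x hx
  have hgain := hopt _ hx
  have hK : replaceBlock (Sfun K p) i b x K = Sfun K p K + if b = K then x - t else 0 := by
    unfold replaceBlock
    by_cases hb : b = K
    · rw [if_pos ⟨i.isLt, hb.ge⟩, if_pos hb, hblock K i.isLt hb.ge]
      ring
    · rw [if_neg (by omega), if_neg hb, add_zero]
  rw [Fobj_ofPrefixSums hgpos hη (by simp [replaceBlock, Sfun_zero]) hx.1,
    Fobj_eq_weightedRate hgpos hη hp.1, weightedRate_replaceBlock hib hblock, hK] at hgain
  simp only [sub_self, mul_zero, ite_self, sum_const_zero]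
  split_ifs at hgain ⊢ <;> linarith

lemma hasDerivAt_log_mul_add {g η t : ℝ} (h : t * g + η ≠ 0) :
    HasDerivAt (fun x => log (x * g + η)) (g / (t * g + η)) t := by
  simpa using (((hasDerivAt_id t).mul_const g).add_const η).log h

lemma block_value_mem_Ecand (hgpos : ∀ i, 0 < g i) (hQdist : ∀ i j : Fin K, i ≠ j → Q i ≠ Q j)
    (hη : 0 < η) (hZ : 0 < Z) {p : Fin K → ℝ}
    (hopt : ∀ q ∈ Dfeas K Pmax, Fobj K g Q η Z q ≤ Fobj K g Q η Z p) (hp : p ∈ Dfeas K Pmax)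
    {i : Fin K} {b : ℕ} {t : ℝ} (hib : (i : ℕ) < b) (hbK : b ≤ K)
    (hblock : ∀ n, (i : ℕ) < n → n ≤ b → Sfun K p n = t) (hlow : Sfun K p i < t)
    (hhigh : b < K → t < Sfun K p (b + 1)) (hend : b = K → t < Pmax) :
    t ∈ Ecand K g Q η Z Pmax := by
  have hmax := isLocalMax_replaceBlock_gain hgpos hη hopt hp hib hbK hblock hlow hhigh hend
  have ht : 0 ≤ t := (Sfun_nonneg hp.1 i).trans hlow.le
  have hpos : ∀ m, 0 < t * g m + η := fun m => by have := hgpos m; positivity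
  have hL : ∀ m, HasDerivAt (fun x => Q m * (log (x * g m + η) - log (t * g m + η)))
      (Q m * (g m / (t * g m + η))) t := fun m =>
    ((hasDerivAt_log_mul_add (hpos m).ne').sub_const _).const_mul (Q m)
  have hgi := hgpos i
  by_cases hb : b < K
  · obtain ⟨j, rfl⟩ : ∃ j : Fin K, (j : ℕ) = b := ⟨⟨b, hb⟩, rfl⟩
    have hij : i < j := hib
    simp only [Fin.val_inj, Fintype.sum_ite_eq', j.isLt.ne, if_false, sub_zero] at hmax
    have hstat := hmax.hasDerivAt_eq_zero ((hL i).sub (hL j))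
    have hgj := hgpos j
    have hQ : Q i - Q j ≠ 0 := sub_ne_zero.2 (hQdist i j hij.ne)
    refine Or.inl (Or.inr ⟨i, j, hij, ?_⟩)
    field_simp at hstat ⊢
    linear_combination hstat
  · have hbK' : b = K := by omega
    simp only [hbK', show ∀ m : Fin K, (m : ℕ) ≠ K from fun m => m.isLt.ne, if_false, if_true,
      sum_const_zero, sub_zero] at hmax
    have hstat := hmax.hasDerivAt_eq_zero
      ((hL i).sub (((hasDerivAt_id' t).sub_const t).const_mul Z))
    refine Or.inr ⟨i, ?_⟩
    field_simp at hstat ⊢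
    linear_combination -hstat

end Objective

theorem finite_point_structure_general
    (K : ℕ) (g Q : Fin K → ℝ) (η Z Pmax : ℝ)
    (hgpos : ∀ i, 0 < g i)
    (hQdist : ∀ i j : Fin K, i ≠ j → Q i ≠ Q j)
    (hη : 0 < η) (hZ : 0 < Z)
    (pstar : Fin K → ℝ) (hfeas : pstar ∈ Dfeas K Pmax)
    (hopt : ∀ q ∈ Dfeas K Pmax, Fobj K g Q η Z q ≤ Fobj K g Q η Z pstar) :
    ∀ k : ℕ, 1 ≤ k → k ≤ K → Sfun K pstar k ∈ Ecand K g Q η Z Pmax := by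
  intro k hk1 hkK
  by_cases h0 : Sfun K pstar k = 0
  · exact Or.inl (Or.inl (Or.inl h0))
  by_cases hP : Sfun K pstar k = Pmax
  · exact Or.inl (Or.inl (Or.inr hP))
  obtain ⟨i, b, hib, hbK, hblock, hlow, hhigh⟩ :=
    exists_maximal_block hfeas.1 hk1 hkK ((Sfun_nonneg hfeas.1 k).lt_of_ne' h0)
  refine block_value_mem_Ecand hgpos hQdist hη hZ hopt hfeas hib hbK hblock hlow hhigh
    fun hb => lt_of_le_of_ne ?_ hP
  rw [← hblock K i.isLt hb.ge]
  exact hfeas.2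

/-- **Finite-point structure (Lemma 1).** If `p*` is a global maximizer of `F` over `D`,
then every partial sum `S_k(p*)`, `1 ≤ k ≤ K`, lies in the finite candidate set `E`. -/
theorem finite_point_structure
    (K : ℕ) (hK : 1 ≤ K) (g Q : Fin K → ℝ) (η Z Pmax : ℝ)
    (hg : ∀ i j : Fin K, i ≤ j → g j ≤ g i) (hgpos : ∀ i, 0 < g i)
    (hQpos : ∀ i, 0 < Q i) (hQdist : ∀ i j : Fin K, i ≠ j → Q i ≠ Q j)
    (hη : 0 < η) (hZ : 0 < Z) (hP : 0 < Pmax)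
    (pstar : Fin K → ℝ) (hfeas : pstar ∈ Dfeas K Pmax)
    (hopt : ∀ q ∈ Dfeas K Pmax, Fobj K g Q η Z q ≤ Fobj K g Q η Z pstar) :
    ∀ k : ℕ, 1 ≤ k → k ≤ K → Sfun K pstar k ∈ Ecand K g Q η Z Pmax :=
  finite_point_structure_general K g Q η Z Pmax hgpos hQdist hη hZ pstar hfeas hopt
end

section
/- Incremental structure (Lemma 2): Let 2 ≤ k ≤ K and A ≥ 0. If (p*_1, …, p*_k) is a global maximizer of G_k over the set {(p_1, …, p_k) : p_j ≥ 0 for all j, and p_1 + ⋯ + p_k = A}, then (p*_1, …, p*_{k−1}) is a global maximizer of G_{k−1} over the set {(p_1, …, p_{k−1}) : p_j ≥ 0 for all j, and p_1 + ⋯ + p_{k−1} = p*_1 + ⋯ + p*_{k−1}}. -/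
open Finset

/-- `f_k(s, q) = Q_k log(1 + q g_k / (s g_k + η)) − Z q`. -/
noncomputable def ff (K : ℕ) (g Q : Fin K → ℝ) (η Z : ℝ) (j : Fin K) (s q : ℝ) : ℝ :=
  Q j * Real.log (1 + q * g j / (s * g j + η)) - Z * q

/-- `G_k(p_1, …, p_k) = Σ_{j=1}^k f_j(S_{j−1}, p_j)`. -/
noncomputable def Gfun (K : ℕ) (g Q : Fin K → ℝ) (η Z : ℝ) (k : ℕ) (p : Fin K → ℝ) : ℝ :=
  ∑ j : Fin K, if (j : ℕ) < k then ff K g Q η Z j (Sfun K p (j : ℕ)) (p j) else 0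

lemma Sfun_congr (K : ℕ) (p q : Fin K → ℝ) (m : ℕ)
    (h : ∀ j : Fin K, (j : ℕ) < m → p j = q j) : Sfun K p m = Sfun K q m := by
  unfold Sfun
  refine Finset.sum_congr rfl fun j _ => ?_
  by_cases hj : (j : ℕ) < m
  · simp [hj, h j hj]
  · simp [hj]

lemma sum_split (K k : ℕ) (hk : 1 ≤ k) (hkK : k ≤ K) (b : Fin K → ℝ) :
    (∑ j : Fin K, if (j : ℕ) < k then b j else 0) =
      (∑ j : Fin K, if (j : ℕ) < k - 1 then b j else 0) + b ⟨k - 1, by omega⟩ := by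
  have h1 : (∑ j : Fin K, if (j : ℕ) < k then b j else 0) =
      ∑ j : Fin K, ((if (j : ℕ) < k - 1 then b j else 0)
        + (if j = (⟨k - 1, by omega⟩ : Fin K) then b j else 0)) := by
    refine Finset.sum_congr rfl fun j _ => ?_
    rcases lt_trichotomy (j : ℕ) (k - 1) with h | h | h
    · have h2 : (j : ℕ) < k := by omega
      have h3 : j ≠ (⟨k - 1, by omega⟩ : Fin K) := by
        intro he; rw [Fin.ext_iff] at he; simp at he; omega
      simp [h, h2, h3]
    · have h2 : (j : ℕ) < k := by omega
      have h3 : j = (⟨k - 1, by omega⟩ : Fin K) := by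
        rw [Fin.ext_iff]; simpa using h
      simp [h, h2, h3]
      exact fun h0 => absurd h0 (by omega)
    · have h2 : ¬ (j : ℕ) < k := by omega
      have h2' : ¬ (j : ℕ) < k - 1 := by omega
      have h3 : j ≠ (⟨k - 1, by omega⟩ : Fin K) := by
        intro he; rw [Fin.ext_iff] at he; simp at he; omega
      simp [h2, h2', h3]
  rw [h1, Finset.sum_add_distrib]
  congr 1
  simp

/-- **Incremental structure (Lemma 2).** If `(p*_1, …, p*_k)` maximizes `G_k` over the simplex
`{p ≥ 0 : p_1 + ⋯ + p_k = A}`, then `(p*_1, …, p*_{k−1})` maximizes `G_{k−1}` over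
`{p ≥ 0 : p_1 + ⋯ + p_{k−1} = p*_1 + ⋯ + p*_{k−1}}`. -/
theorem incremental_structure
    (K : ℕ) (hK : 1 ≤ K) (g Q : Fin K → ℝ) (η Z : ℝ)
    (hg : ∀ i j : Fin K, i ≤ j → g j ≤ g i) (hgpos : ∀ i, 0 < g i)
    (hQpos : ∀ i, 0 < Q i) (hη : 0 < η) (hZ : 0 < Z)
    (k : ℕ) (hk2 : 2 ≤ k) (hkK : k ≤ K) (A : ℝ) (hA : 0 ≤ A)
    (pstar : Fin K → ℝ)
    (hnn : ∀ j : Fin K, (j : ℕ) < k → 0 ≤ pstar j)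
    (hsum : Sfun K pstar k = A)
    (hopt : ∀ p : Fin K → ℝ, (∀ j : Fin K, (j : ℕ) < k → 0 ≤ p j) → Sfun K p k = A →
      Gfun K g Q η Z k p ≤ Gfun K g Q η Z k pstar) :
    ∀ p : Fin K → ℝ, (∀ j : Fin K, (j : ℕ) < k - 1 → 0 ≤ p j) →
      Sfun K p (k - 1) = Sfun K pstar (k - 1) →
      Gfun K g Q η Z (k - 1) p ≤ Gfun K g Q η Z (k - 1) pstar := by
  intro p hpnn hpsum
  have hklt : k - 1 < K := by omega
  set jk : Fin K := ⟨k - 1, hklt⟩ with hjk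
  -- extended point
  set p' : Fin K → ℝ := fun j => if (j : ℕ) < k - 1 then p j else pstar j with hp'
  have hp'eq : ∀ j : Fin K, (j : ℕ) < k - 1 → p' j = p j := by
    intro j hj; simp [hp', hj]
  have hS' : ∀ m : ℕ, m ≤ k - 1 → Sfun K p' m = Sfun K p m := by
    intro m hm
    exact Sfun_congr K p' p m (fun j hj => hp'eq j (by omega))
  have hp'nn : ∀ j : Fin K, (j : ℕ) < k → 0 ≤ p' j := by
    intro j hj
    by_cases h : (j : ℕ) < k - 1
    · rw [hp'eq j h]; exact hpnn j h
    · simp only [hp', h, if_false]; exact hnn j hj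
  have hSsplit : ∀ q : Fin K → ℝ, Sfun K q k = Sfun K q (k - 1) + q jk := by
    intro q; exact sum_split K k (by omega) hkK q
  have hp'sum : Sfun K p' k = A := by
    rw [hSsplit]
    have : p' jk = pstar jk := by simp [hp', hjk]
    rw [this, hS' (k - 1) le_rfl, hpsum, ← hSsplit, hsum]
  have hGsplit : ∀ q : Fin K → ℝ, Gfun K g Q η Z k q =
      Gfun K g Q η Z (k - 1) q + ff K g Q η Z jk (Sfun K q (k - 1)) (q jk) := by
    intro q
    have := sum_split K k (by omega) hkK
      (fun j => ff K g Q η Z j (Sfun K q (j : ℕ)) (q j))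
    simpa [Gfun, hjk] using this
  have hle := hopt p' hp'nn hp'sum
  rw [hGsplit p', hGsplit pstar] at hle
  have hG' : Gfun K g Q η Z (k - 1) p' = Gfun K g Q η Z (k - 1) p := by
    unfold Gfun
    refine Finset.sum_congr rfl fun j _ => ?_
    by_cases hj : (j : ℕ) < k - 1
    · rw [if_pos hj, if_pos hj, hp'eq j hj, hS' (j : ℕ) (by omega)]
    · rw [if_neg hj, if_neg hj]
  have hterm : ff K g Q η Z jk (Sfun K p' (k - 1)) (p' jk)
      = ff K g Q η Z jk (Sfun K pstar (k - 1)) (pstar jk) := by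
    rw [hS' (k - 1) le_rfl, hpsum]
    congr 1
    simp [hp', hjk]
  rw [hG', hterm] at hle
  linarith
end

section
/- Non-concavity of the NOMA power allocation objective: There exist K = 2 and parameters g_1 ≥ g_2 > 0, Q_1, Q_2 > 0, η > 0, Z > 0, P_max > 0 such that the NOMA objective F(p_1, p_2) = Q_1·log(1 + p_1 g_1/η) + Q_2·log(1 + p_2 g_2/(p_1 g_2 + η)) − Z·(p_1 + p_2) is not concave on the feasible set D = {(p_1, p_2) : p_1 ≥ 0, p_2 ≥ 0, p_1 + p_2 ≤ P_max}. -/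
/-- **Non-concavity of the NOMA power allocation objective.** There exist parameters
`g₁ ≥ g₂ > 0`, `Q₁, Q₂ > 0`, `η > 0`, `Z > 0`, `P_max > 0` (two users) such that
`F(p₁, p₂) = Q₁ log(1 + p₁g₁/η) + Q₂ log(1 + p₂g₂/(p₁g₂ + η)) − Z(p₁ + p₂)`
is not concave on `D = {(p₁, p₂) : p₁ ≥ 0, p₂ ≥ 0, p₁ + p₂ ≤ P_max}`. -/
theorem noma_objective_not_concave :
    ∃ (g₁ g₂ Q₁ Q₂ η Z Pmax : ℝ),
      0 < g₂ ∧ g₂ ≤ g₁ ∧ 0 < Q₁ ∧ 0 < Q₂ ∧ 0 < η ∧ 0 < Z ∧ 0 < Pmax ∧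
      ¬ ConcaveOn ℝ {q : ℝ × ℝ | 0 ≤ q.1 ∧ 0 ≤ q.2 ∧ q.1 + q.2 ≤ Pmax}
          (fun q => Q₁ * Real.log (1 + q.1 * g₁ / η)
            + Q₂ * Real.log (1 + q.2 * g₂ / (q.1 * g₂ + η))
            - Z * (q.1 + q.2)) := by
  refine ⟨1, 1, 1/10, 1, 1, 1, 3, one_pos, le_refl 1, by norm_num, one_pos, one_pos,
    one_pos, by norm_num, ?_⟩
  intro h
  have hx : ((0:ℝ), (1:ℝ)) ∈ {q : ℝ × ℝ | 0 ≤ q.1 ∧ 0 ≤ q.2 ∧ q.1 + q.2 ≤ 3} := by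
    constructor <;> norm_num
  have hy : ((2:ℝ), (1:ℝ)) ∈ {q : ℝ × ℝ | 0 ≤ q.1 ∧ 0 ≤ q.2 ∧ q.1 + q.2 ≤ 3} := by
    constructor <;> norm_num
  have key := h.2 hx hy (by norm_num : (0:ℝ) ≤ 1/2) (by norm_num : (0:ℝ) ≤ 1/2)
    (by norm_num : (1:ℝ)/2 + 1/2 = 1)
  have hmid : ((1:ℝ)/2) • ((0:ℝ), (1:ℝ)) + ((1:ℝ)/2) • ((2:ℝ), (1:ℝ)) = ((1:ℝ), (1:ℝ)) := by
    simp [Prod.ext_iff]; norm_num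
  rw [hmid] at key
  simp only [smul_eq_mul] at key
  norm_num at key
  -- key is now an inequality between combinations of logs
  have h2 : Real.log 2 = Real.log 2 := rfl
  -- reduce to 29 log 3 < 48 log 2
  have hlog : 29 * Real.log 3 < 48 * Real.log 2 := by
    have h3 : Real.log (3^29 : ℝ) < Real.log (2^48 : ℝ) := by
      apply Real.log_lt_log (by positivity)
      norm_num
    rw [Real.log_pow, Real.log_pow] at h3
    push_cast at h3
    linarith
  -- rewrite the logs in key in terms of log 2 and log 3
  have e32 : Real.log (3/2 : ℝ) = Real.log 3 - Real.log 2 := by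
    rw [Real.log_div (by norm_num) (by norm_num)]
  have e43 : Real.log (4/3 : ℝ) = 2 * Real.log 2 - Real.log 3 := by
    rw [Real.log_div (by norm_num) (by norm_num)]
    rw [show (4:ℝ) = 2^2 by norm_num, Real.log_pow]
    push_cast; ring
  -- try to finish
  nlinarith [key, hlog, e32, e43, Real.log_pos (by norm_num : (1:ℝ) < 2),
    Real.log_pos (by norm_num : (1:ℝ) < 3)]
end
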